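/- arXiv:2205.06482 — 6 statements merged into one kernel-verified Lean document; each statement's English description precedes it below -/
import Mathlib

section
/- Let b ∈ (0,1], λ > 0 and M > 0 be real numbers with b·λ·M > 1. Then there exists a unique real number Q < 0 satisfying b·λ·e^{Q·M} = b·λ + Q, and this Q moreover satisfies −b·λ < Q < 0 (in particular b·λ + Q > 0). -/
/-!
Put `a = b·λ` and `f Q = a·e^{QM} - (a + Q)`. Then `f` is strictly convex with `f 0 = 0` and
`f' 0 = aM - 1 > 0`, so `f` is negative just left of `0`, while `f (-a) = a·e^{-aM} > 0`; the
intermediate value theorem gives a root in `(-a, 0)`. A strictly convex function cannot vanish at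
three points, so with `0` being one of them there is at most one negative root. Finally any root
satisfies `a + Q = a·e^{QM} > 0`.
-/

open Real Set Filter Topology

lemma StrictConvexOn.subsingleton_zeros_lt {𝕜 : Type*} [Field 𝕜] [LinearOrder 𝕜]
    [IsStrictOrderedRing 𝕜] {s : Set 𝕜} {f : 𝕜 → 𝕜} (hf : StrictConvexOn 𝕜 s f) {c : 𝕜}
    (hc : c ∈ s) (hfc : f c = 0) : {x ∈ s | x < c ∧ f x = 0}.Subsingleton := by
  have key : ∀ x ∈ s, ∀ y, x < y → y < c → f x = 0 → f y = 0 → False := by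
    intro x hx y hxy hyc hfx hfy
    simpa [hfx, hfy, hfc] using hf.slope_strict_mono_adjacent hx hc hxy hyc
  rintro x ⟨hx, hxc, hfx⟩ y ⟨hy, hyc, hfy⟩
  by_contra hne
  rcases lt_or_gt_of_ne hne with hxy | hyx
  · exact key x hx y hxy hyc hfx hfy
  · exact key y hy x hyx hxc hfy hfx

lemma HasDerivAt.eventually_neg_nhdsLT {f : ℝ → ℝ} {f' x : ℝ} (hf : HasDerivAt f f' x)
    (hf' : 0 < f') (hfx : f x = 0) : ∀ᶠ y in 𝓝[<] x, f y < 0 := by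
  filter_upwards [nhdsLT_le_nhdsNE x (hf.tendsto_slope.eventually (eventually_gt_nhds hf')),
    self_mem_nhdsWithin] with y hslope hy using neg_of_slope_pos hy hslope hfx

section RootEquation

variable {a M : ℝ}

lemma strictConvexOn_const_mul_exp_mul_sub (ha : 0 < a) (hM : M ≠ 0) :
    StrictConvexOn ℝ univ fun Q => a * exp (Q * M) - (a + Q) := by
  refine ⟨convex_univ, fun x _ y _ hxy s t hs ht hst => ?_⟩
  have hexp := strictConvexOn_exp.2 (mem_univ (x * M)) (mem_univ (y * M))
    (by simpa [hM] using hxy) hs ht hst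
  simp only [smul_eq_mul] at hexp ⊢
  rw [show (s * x + t * y) * M = s * (x * M) + t * (y * M) by ring]
  linear_combination (mul_lt_mul_of_pos_left hexp ha) + a * hst

lemma exists_const_mul_exp_mul_eq_add (ha : 0 < a) (haM : 1 < a * M) :
    ∃ Q ∈ Ioo (-a) 0, a * exp (Q * M) = a + Q := by
  set f : ℝ → ℝ := fun Q => a * exp (Q * M) - (a + Q)
  have hderiv : HasDerivAt f (a * M - 1) 0 := by
    have h := ((hasDerivAt_mul_const M (x := (0 : ℝ))).exp.const_mul a).sub
      ((hasDerivAt_id' (0 : ℝ)).const_add a)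
    simp only [zero_mul, exp_zero, one_mul] at h
    exact h
  have hneg : ∀ᶠ Q in 𝓝[<] 0, f Q < 0 :=
    hderiv.eventually_neg_nhdsLT (by linarith) (by simp [f])
  obtain ⟨Q₀, hfQ₀, hQ₀⟩ := (hneg.and (Ioo_mem_nhdsLT (neg_lt_zero.2 ha))).exists
  have hf_neg_a : 0 < f (-a) := by simp only [f]; nlinarith [exp_pos (-a * M)]
  obtain ⟨Q, hQ, hfQ⟩ := intermediate_value_Ioo' hQ₀.1.le (by fun_prop : Continuous f).continuousOn
    ⟨hfQ₀, hf_neg_a⟩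
  exact ⟨Q, ⟨hQ.1, hQ.2.trans hQ₀.2⟩, sub_eq_zero.1 hfQ⟩

end RootEquation

theorem root_equation_unique_negative_solution_general
    (b lam M : ℝ) (hb0 : 0 < b) (hlam : 0 < lam) (hM : 0 < M)
    (hpsi : 1 < b * lam * M) :
    (∃! Q : ℝ, Q < 0 ∧ b * lam * Real.exp (Q * M) = b * lam + Q) ∧
    ∀ Q : ℝ, Q < 0 → b * lam * Real.exp (Q * M) = b * lam + Q →
      -(b * lam) < Q ∧ Q < 0 ∧ 0 < b * lam + Q := by
  have ha : 0 < b * lam := mul_pos hb0 hlam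
  have hroot_pos : ∀ Q, b * lam * exp (Q * M) = b * lam + Q → 0 < b * lam + Q :=
    fun Q hQ => hQ ▸ mul_pos ha (exp_pos _)
  have hunique := (strictConvexOn_const_mul_exp_mul_sub ha hM.ne').subsingleton_zeros_lt
    (mem_univ 0) (by simp)
  obtain ⟨Q, ⟨-, hQneg⟩, hQ⟩ := exists_const_mul_exp_mul_eq_add ha hpsi
  refine ⟨⟨Q, ⟨hQneg, hQ⟩, fun Q' ⟨hQ'neg, hQ'⟩ => ?_⟩, fun Q' hQ'neg hQ' =>
    ⟨by linarith [hroot_pos Q' hQ'], hQ'neg, hroot_pos Q' hQ'⟩⟩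
  exact hunique ⟨mem_univ Q', hQ'neg, sub_eq_zero.2 hQ'⟩ ⟨mem_univ Q, hQneg, sub_eq_zero.2 hQ⟩

/-- Root equation for the stationary energy density: for `b ∈ (0,1]`, `λ > 0`, `M > 0`
with `b·λ·M > 1`, there is a unique `Q < 0` with `b·λ·e^{QM} = b·λ + Q`, and any such
`Q` satisfies `-b·λ < Q < 0` (in particular `b·λ + Q > 0`). -/
theorem root_equation_unique_negative_solution
    (b lam M : ℝ) (hb0 : 0 < b) (hb1 : b ≤ 1) (hlam : 0 < lam) (hM : 0 < M)
    (hpsi : 1 < b * lam * M) :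
    (∃! Q : ℝ, Q < 0 ∧ b * lam * Real.exp (Q * M) = b * lam + Q) ∧
    ∀ Q : ℝ, Q < 0 → b * lam * Real.exp (Q * M) = b * lam + Q →
      -(b * lam) < Q ∧ Q < 0 ∧ 0 < b * lam + Q :=
  root_equation_unique_negative_solution_general b lam M hb0 hlam hM hpsi
end

section
/- Let b > 0, λ > 0 and M > 0 be real numbers with b·λ·M ≤ 1. Then the only real number Q ≤ 0 satisfying b·λ·e^{Q·M} = b·λ + Q is Q = 0. -/
/-- Degenerate case of the root equation: when `b·λ·M ≤ 1`, the only nonpositive real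
solution `Q` of `b·λ·e^{QM} = b·λ + Q` is `Q = 0`. -/
theorem root_equation_only_zero_solution
    (b lam M : ℝ) (hb0 : 0 < b) (hlam : 0 < lam) (hM : 0 < M)
    (hpsi : b * lam * M ≤ 1) :
    ∀ Q : ℝ, Q ≤ 0 → (b * lam * Real.exp (Q * M) = b * lam + Q ↔ Q = 0) := by
  intro Q hQ
  constructor
  · intro heq
    by_contra hne
    have hQlt : Q < 0 := lt_of_le_of_ne hQ hne
    have hQM : Q * M ≠ 0 := by
      exact mul_ne_zero hne (ne_of_gt hM)
    have hexp : Q * M + 1 < Real.exp (Q * M) := Real.add_one_lt_exp hQM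
    have hbl : 0 < b * lam := mul_pos hb0 hlam
    nlinarith [mul_lt_mul_of_pos_left hexp hbl]
  · intro h
    subst h
    simp
end

section
/- Let b ∈ (0,1], λ > 0, M > 0 with b·λ·M > 1, let Q < 0 be the unique negative real solution of b·λ·e^{Q·M} = b·λ + Q, set a = 1 − b and k = −Q/(M·(b·λ + Q)). Then ∫₀^M e^{λ·μ}·(1/M)·(1 − e^{Q·μ}) dμ = k·e^{Q·M}·(b + a·e^{λ·M})/(λ + Q). -/
/-!
Splitting `e^{λμ}(1 - e^{Qμ})` into `e^{λμ} - e^{(λ+Q)μ}` reduces the left side to two elementary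
exponential integrals. On the right, the root equation `bλe^{QM} = bλ + Q` turns the normalisation
`k` into `-Q / (M bλ e^{QM})`, and the remaining identity is the root equation multiplied by `-e^{λM}`.
-/

open MeasureTheory intervalIntegral

theorem integral_exp_mul {c : ℝ} (hc : c ≠ 0) (a b : ℝ) :
    ∫ x in a..b, Real.exp (c * x) = (Real.exp (c * b) - Real.exp (c * a)) / c := by
  rw [intervalIntegral.integral_comp_mul_left Real.exp hc, integral_exp, smul_eq_mul,
    inv_mul_eq_div]

theorem integral_exp_mul_mul_one_sub_exp {lam Q : ℝ} (hlam : lam ≠ 0) (hlQ : lam + Q ≠ 0)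
    (C M : ℝ) :
    ∫ μ in (0:ℝ)..M, Real.exp (lam * μ) * (C * (1 - Real.exp (Q * μ)))
      = C * ((Real.exp (lam * M) - 1) / lam - (Real.exp ((lam + Q) * M) - 1) / (lam + Q)) := by
  have hsplit : (fun μ => Real.exp (lam * μ) * (C * (1 - Real.exp (Q * μ))))
      = fun μ => C * Real.exp (lam * μ) - C * Real.exp ((lam + Q) * μ) := by
    funext μ
    rw [add_mul, Real.exp_add]
    ring
  rw [hsplit, intervalIntegral.integral_sub (Continuous.intervalIntegrable (by fun_prop) _ _)
      (Continuous.intervalIntegrable (by fun_prop) _ _),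
    intervalIntegral.integral_const_mul, intervalIntegral.integral_const_mul,
    integral_exp_mul hlam, integral_exp_mul hlQ, mul_zero, mul_zero, Real.exp_zero, mul_sub]

theorem add_ne_zero_of_exp_root {b lam M Q : ℝ} (hb : 0 < b) (hb1 : b ≤ 1) (hlam : 0 < lam)
    (hroot : b * lam * Real.exp (Q * M) = b * lam + Q) : lam + Q ≠ 0 := by
  intro h
  -- at `Q = -λ` the root equation reads `bλe^{-λM} = (b - 1)λ ≤ 0`
  rw [show Q = -lam by linarith] at hroot
  nlinarith [Real.exp_pos (-lam * M), mul_pos hb hlam]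

theorem lower_branch_consistency_general
    (b lam M Q a k : ℝ) (hb0 : 0 < b) (hb1 : b ≤ 1) (hlam : 0 < lam) (hM : 0 < M)
    (hroot : b * lam * Real.exp (Q * M) = b * lam + Q)
    (ha : a = 1 - b) (hk : k = -Q / (M * (b * lam + Q))) :
    ∫ μ in (0:ℝ)..M, Real.exp (lam * μ) * ((1 / M) * (1 - Real.exp (Q * μ)))
      = k * Real.exp (Q * M) * (b + a * Real.exp (lam * M)) / (lam + Q) := by
  have hlQ := add_ne_zero_of_exp_root hb0 hb1 hlam hroot
  rw [integral_exp_mul_mul_one_sub_exp hlam.ne' hlQ, add_mul, Real.exp_add, hk, ← hroot, ha]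
  have hE : Real.exp (Q * M) ≠ 0 := (Real.exp_pos _).ne'
  generalize Real.exp (Q * M) = E at hroot hE ⊢
  generalize Real.exp (lam * M) = F
  field_simp
  linear_combination -F * hroot

/-- Consistency condition for the lower branch of the stationary density:
`∫₀^M e^{λμ}·(1/M)(1 − e^{Qμ}) dμ = k e^{QM}(b + a e^{λM})/(λ+Q)`
where `a = 1 − b` and `k = −Q/(M(bλ+Q))`. -/
theorem lower_branch_consistency
    (b lam M Q a k : ℝ) (hb0 : 0 < b) (hb1 : b ≤ 1) (hlam : 0 < lam) (hM : 0 < M)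
    (hpsi : 1 < b * lam * M) (hQ : Q < 0)
    (hroot : b * lam * Real.exp (Q * M) = b * lam + Q)
    (ha : a = 1 - b) (hk : k = -Q / (M * (b * lam + Q))) :
    ∫ μ in (0:ℝ)..M, Real.exp (lam * μ) * ((1 / M) * (1 - Real.exp (Q * μ)))
      = k * Real.exp (Q * M) * (b + a * Real.exp (lam * M)) / (lam + Q) :=
  lower_branch_consistency_general b lam M Q a k hb0 hb1 hlam hM hroot ha hk
end

section
/- Let b ∈ (0,1], λ > 0, M > 0 with b·λ·M > 1, let Q < 0 be the unique negative real solution of b·λ·e^{Q·M} = b·λ + Q, and set k = −Q/(M·(b·λ + Q)). Then for every x with 0 ≤ x ≤ M: (1/M)·(1 − e^{Q·x}) = ∫₀^x λ·e^{−λ(x−μ)}·(1/M)·(1 − e^{Q·μ}) dμ + b·∫_M^{x+M} λ·e^{−λ(x+M−μ)}·k·e^{Q·μ} dμ. -/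
open MeasureTheory intervalIntegral

/-!
Both integrals are convolutions of the exponential kernel `λ e^{-λ t}` with exponentials, so they
are computed in closed form. The kernel applied to the constant `1` and to `e^{Qμ}` on `[0, x]`
produces `e^{-λx}` terms which cancel against the corresponding term of the upper-branch integral
precisely because `bλ e^{QM} = bλ + Q` and `k (bλ + Q) = -Q/M`.
-/

open Real

theorem integral_exp_kernel_mul_exp {lam c : ℝ} (h : lam + c ≠ 0) (a x : ℝ) :
    ∫ μ in a..x, lam * exp (-lam * (x - μ)) * exp (c * μ)
      = lam / (lam + c) * (exp (c * x) - exp (-lam * (x - a)) * exp (c * a)) := by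
  have hderiv : ∀ μ : ℝ, HasDerivAt (fun μ => lam / (lam + c) * exp (-lam * (x - μ) + c * μ))
      (lam * exp (-lam * (x - μ)) * exp (c * μ)) μ := by
    intro μ
    have hlin : HasDerivAt (fun μ => -lam * (x - μ) + c * μ) (lam + c) μ :=
      ((((hasDerivAt_id' μ).const_sub x).const_mul (-lam)).add
        ((hasDerivAt_id' μ).const_mul c)).congr_deriv (by ring)
    refine (hlin.exp.const_mul (lam / (lam + c))).congr_deriv ?_
    rw [exp_add]
    field_simp
  rw [integral_eq_sub_of_hasDerivAt (fun μ _ => hderiv μ)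
    (by apply Continuous.intervalIntegrable; fun_prop)]
  simp only [sub_self, mul_zero, zero_add, exp_add]
  ring

theorem integral_exp_kernel_mul_one_sub_exp {lam c : ℝ} (hlam : lam ≠ 0) (h : lam + c ≠ 0)
    (x : ℝ) :
    ∫ μ in (0:ℝ)..x, lam * exp (-lam * (x - μ)) * (1 - exp (c * μ))
      = 1 - exp (-lam * x) - lam / (lam + c) * (exp (c * x) - exp (-lam * x)) := by
  have hsplit : (fun μ => lam * exp (-lam * (x - μ)) * (1 - exp (c * μ)))
      = fun μ => lam * exp (-lam * (x - μ)) * exp (0 * μ)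
        - lam * exp (-lam * (x - μ)) * exp (c * μ) := by
    ext μ
    rw [zero_mul, exp_zero]
    ring
  rw [hsplit, intervalIntegral.integral_sub (by apply Continuous.intervalIntegrable; fun_prop)
    (by apply Continuous.intervalIntegrable; fun_prop),
    integral_exp_kernel_mul_exp (by simpa using hlam), integral_exp_kernel_mul_exp h]
  simp only [add_zero, sub_zero, zero_mul, mul_zero, exp_zero]
  field_simp

theorem lower_branch_stationary_integral_equation_general
    (b lam M Q k : ℝ) (hb0 : 0 < b) (hb1 : b ≤ 1) (hlam : 0 < lam)
    (hroot : b * lam * Real.exp (Q * M) = b * lam + Q)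
    (hk : k = -Q / (M * (b * lam + Q))) :
    ∀ x : ℝ, 0 ≤ x → x ≤ M →
      (1 / M) * (1 - Real.exp (Q * x))
        = (∫ μ in (0:ℝ)..x,
            lam * Real.exp (-lam * (x - μ)) * ((1 / M) * (1 - Real.exp (Q * μ))))
          + b * ∫ μ in M..(x + M),
              lam * Real.exp (-lam * (x + M - μ)) * (k * Real.exp (Q * μ)) := by
  intro x _ _
  have hB : 0 < b * lam + Q := by
    rw [← hroot]; positivity
  -- `λ + Q ≥ bλ + Q > 0` as `b ≤ 1`
  have hL : lam + Q ≠ 0 := by nlinarith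
  have hkB : b * lam * exp (Q * M) * k = -Q / M := by
    rw [hroot, hk]; field_simp
  have hlower : ∫ μ in (0:ℝ)..x,
        lam * exp (-lam * (x - μ)) * ((1 / M) * (1 - exp (Q * μ)))
      = 1 / M * (1 - exp (-lam * x) - lam / (lam + Q) * (exp (Q * x) - exp (-lam * x))) := by
    simp only [mul_left_comm _ (1 / M), intervalIntegral.integral_const_mul,
      integral_exp_kernel_mul_one_sub_exp hlam.ne' hL]
  have hupper : b * ∫ μ in M..(x + M), lam * exp (-lam * (x + M - μ)) * (k * exp (Q * μ))
      = b * lam * exp (Q * M) * k * ((exp (Q * x) - exp (-lam * x)) / (lam + Q)) := by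
    simp only [mul_left_comm _ k, intervalIntegral.integral_const_mul,
      integral_exp_kernel_mul_exp hL, add_sub_cancel_right, mul_add, exp_add]
    ring
  rw [hlower, hupper, hkB]
  field_simp
  ring

/-- The lower branch `g₁(x) = (1 − e^{Qx})/M` (for `0 ≤ x ≤ M`) satisfies the
stationary integral equation of the energy buffer on the lower range, where the
upper branch is `g₂(μ) = k e^{Qμ}` on `[M,∞)` and `k = −Q/(M(bλ+Q))`. -/
theorem lower_branch_stationary_integral_equation
    (b lam M Q k : ℝ) (hb0 : 0 < b) (hb1 : b ≤ 1) (hlam : 0 < lam) (hM : 0 < M)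
    (hpsi : 1 < b * lam * M) (hQ : Q < 0)
    (hroot : b * lam * Real.exp (Q * M) = b * lam + Q)
    (hk : k = -Q / (M * (b * lam + Q))) :
    ∀ x : ℝ, 0 ≤ x → x ≤ M →
      (1 / M) * (1 - Real.exp (Q * x))
        = (∫ μ in (0:ℝ)..x,
            lam * Real.exp (-lam * (x - μ)) * ((1 / M) * (1 - Real.exp (Q * μ))))
          + b * ∫ μ in M..(x + M),
              lam * Real.exp (-lam * (x + M - μ)) * (k * Real.exp (Q * μ)) :=
  lower_branch_stationary_integral_equation_general b lam M Q k hb0 hb1 hlam hroot hk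
end

section
/- Let b ∈ (0,1], λ > 0, M > 0 with b·λ·M > 1, let Q < 0 be the unique negative real solution of b·λ·e^{Q·M} = b·λ + Q, and let μ be the probability measure on [0,∞) with Lebesgue density g(x) = (1/M)(1 − e^{Q·x}) for 0 ≤ x < M and g(x) = −Q·e^{Q·x}/(M·(b·λ + Q)) for x ≥ M. Let B, X, E be independent random variables where B has law μ, X is exponentially distributed with rate λ, and E is Bernoulli with success probability b. Then the random variable B′ = B + X − M·(indicator of {B ≥ M and E = 1}) again has law μ; that is, μ is a stationary distribution of the Markov transition x ↦ x + X − M·1{x ≥ M}·1{E}. -/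
open MeasureTheory

/-- The limiting piecewise-exponential density of the energy buffer
(extended by `0` on the negative half-line). -/
noncomputable def statDensity (b lam M Q : ℝ) (x : ℝ) : ℝ :=
  if x < 0 then 0
  else if x < M then (1 / M) * (1 - Real.exp (Q * x))
  else (-Q * Real.exp (Q * x)) / (M * (b * lam + Q))

/-- The stationary probability measure on `[0,∞)` with density `statDensity`. -/
noncomputable def statMeasure (b lam M Q : ℝ) : Measure ℝ :=
  volume.withDensity (fun x => ENNReal.ofReal (statDensity b lam M Q x))

/-- The exponential distribution with rate `lam` as a measure on `ℝ`. -/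
noncomputable def expMeasure' (lam : ℝ) : Measure ℝ :=
  volume.withDensity
    (fun x => ENNReal.ofReal (if 0 ≤ x then lam * Real.exp (-lam * x) else 0))

/-- The Bernoulli distribution with success probability `b` as a measure on `Bool`. -/
noncomputable def bernoulliMeasure (b : ℝ) : Measure Bool :=
  ENNReal.ofReal b • Measure.dirac true + ENNReal.ofReal (1 - b) • Measure.dirac false

/-!
Conditioning on `E`, the law of `B'` is `(b • T₊μ + (1 - b) • μ) ∗ Exp(λ)` with
`T x = x - M·1{x ≥ M}`. The mixture `b • T₊μ + (1 - b) • μ` has a density `m`, so it suffices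
that `m` convolved with `λ e^{-λx}` is the stationary density `g`. Away from `M` one has
`g' = λ (m - g)`, i.e. `(g e^{λx})' = λ m e^{λx}`; `g` is continuous with `g 0 = 0`, so the
fundamental theorem of calculus gives `∫₀^y λ m(x) e^{-λ(y-x)} dx = g y`. The root equation
`b λ e^{QM} = b λ + Q` enters twice: as continuity of `g` at `M`, and as
`b g(x + M) = -Q e^{Qx} / (λ M)`, which makes the derivative identity hold.
-/

open Set Filter Topology
open scoped ENNReal

lemma integrableOn_deriv_of_nonneg_of_ne {F f : ℝ → ℝ} {a b c : ℝ} (hc : c ∈ Icc a b)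
    (hF : ContinuousOn F (Icc a b)) (hderiv : ∀ x ∈ Ioo a b, x ≠ c → HasDerivAt F (f x) x)
    (hpos : ∀ x ∈ Ioo a b, 0 ≤ f x) : IntegrableOn f (Ioc a b) := by
  rw [← Ioc_union_Ioc_eq_Ioc hc.1 hc.2]
  refine IntegrableOn.union ?_ ?_
  · exact intervalIntegral.integrableOn_deriv_of_nonneg (hF.mono (Icc_subset_Icc_right hc.2))
      (fun x hx => hderiv x ⟨hx.1, hx.2.trans_le hc.2⟩ hx.2.ne)
      (fun x hx => hpos x ⟨hx.1, hx.2.trans_le hc.2⟩)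
  · exact intervalIntegral.integrableOn_deriv_of_nonneg (hF.mono (Icc_subset_Icc_left hc.1))
      (fun x hx => hderiv x ⟨hc.1.trans_lt hx.1, hx.2⟩ hx.1.ne')
      (fun x hx => hpos x ⟨hc.1.trans_lt hx.1, hx.2⟩)

noncomputable def transmit (M x : ℝ) : ℝ := if M ≤ x then x - M else x

lemma measurable_transmit (M : ℝ) : Measurable (transmit M) :=
  Measurable.ite measurableSet_Ici (measurable_sub_const M) measurable_id

namespace MeasureTheory.Measure

lemma map_prod_bernoulliMeasure {α β : Type*} [MeasurableSpace α] [MeasurableSpace β]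
    {φ : α × Bool → β} (hφ : Measurable φ) (ρ : Measure α) [SFinite ρ] (b : ℝ) :
    (ρ.prod (bernoulliMeasure b)).map φ =
      ENNReal.ofReal b • ρ.map (fun x => φ (x, true)) +
        ENNReal.ofReal (1 - b) • ρ.map (fun x => φ (x, false)) := by
  rw [bernoulliMeasure, prod_add, prod_smul_right, prod_smul_right, prod_dirac, prod_dirac,
    Measure.map_add _ _ hφ, Measure.map_smul, Measure.map_smul, map_map hφ measurable_prodMk_right,
    map_map hφ measurable_prodMk_right]
  rfl

lemma map_prod_add_eq_map_conv {f : ℝ → ℝ} (hf : Measurable f) (μ ν : Measure ℝ)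
    [SFinite μ] [SFinite ν] :
    (μ.prod ν).map (fun p => f p.1 + p.2) = μ.map f ∗ ν := by
  rw [conv, ← map_id (μ := ν), map_prod_map μ ν hf measurable_id, map_id,
    map_map measurable_add (hf.prodMap measurable_id)]
  rfl

lemma map_sub_const_withDensity {f : ℝ → ℝ≥0∞} (hf : Measurable f) (c : ℝ) :
    (volume.withDensity f).map (· - c) = volume.withDensity (fun x => f (x + c)) := by
  ext s hs
  rw [map_apply (measurable_sub_const c) hs, withDensity_apply _ (measurable_sub_const c hs),
    withDensity_apply _ hs,
    ← (measurePreserving_sub_right volume c).setLIntegral_comp_preimage hs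
      (f := fun x => f (x + c)) (hf.comp (measurable_add_const c))]
  simp only [sub_add_cancel]

lemma map_transmit_withDensity {f : ℝ → ℝ≥0∞} (hf : Measurable f) (M : ℝ) :
    (volume.withDensity f).map (transmit M) =
      volume.withDensity (fun z => (Iio M).indicator f z + (Ici M).indicator f (z + M)) := by
  have below : ((volume.withDensity f).restrict (Iio M)).map (transmit M) =
      volume.withDensity ((Iio M).indicator f) := by
    rw [map_congr (g := id), map_id, restrict_withDensity measurableSet_Iio,
      withDensity_indicator measurableSet_Iio]
    exact ae_restrict_of_forall_mem measurableSet_Iio fun x hx => if_neg (not_le.2 hx)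
  have above : ((volume.withDensity f).restrict (Ici M)).map (transmit M) =
      volume.withDensity (fun z => (Ici M).indicator f (z + M)) := by
    rw [map_congr (g := (· - M)), restrict_withDensity measurableSet_Ici,
      ← withDensity_indicator measurableSet_Ici,
      map_sub_const_withDensity (hf.indicator measurableSet_Ici)]
    exact ae_restrict_of_forall_mem measurableSet_Ici fun x hx => if_pos hx
  rw [← restrict_add_restrict_compl (μ := volume.withDensity f) measurableSet_Iio, compl_Iio,
    Measure.map_add _ _ (measurable_transmit M), below, above,
    ← withDensity_add_left (hf.indicator measurableSet_Iio)]
  rfl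

end MeasureTheory.Measure

instance (b lam M Q : ℝ) : SFinite (statMeasure b lam M Q) := by
  unfold statMeasure; infer_instance

instance (lam : ℝ) : SFinite (expMeasure' lam) := by
  unfold expMeasure'; infer_instance

lemma map_energyStep_eq_conv {Ω : Type*} [MeasurableSpace Ω] {P : Measure Ω}
    {μ ν : Measure ℝ} [SFinite μ] [SFinite ν] {b M : ℝ} {B X : Ω → ℝ} {E : Ω → Bool}
    (hB : Measurable B) (hX : Measurable X) (hE : Measurable E)
    (hjoint : P.map (fun ω => ((B ω, X ω), E ω)) = (μ.prod ν).prod (bernoulliMeasure b)) :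
    P.map (fun ω => B ω + X ω - (if M ≤ B ω ∧ E ω = true then M else 0)) =
      (ENNReal.ofReal b • μ.map (transmit M) + ENNReal.ofReal (1 - b) • μ) ∗ ν := by
  set φ : (ℝ × ℝ) × Bool → ℝ := fun p => p.1.1 + p.1.2 - if M ≤ p.1.1 ∧ p.2 = true then M else 0
  have hφ : Measurable φ := by
    refine (by fun_prop : Measurable fun p : (ℝ × ℝ) × Bool => p.1.1 + p.1.2).sub
      (Measurable.ite ?_ measurable_const measurable_const)
    exact (measurableSet_le measurable_const (measurable_fst.comp measurable_fst)).inter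
      (measurable_snd (measurableSet_singleton true))
  have hφ_true : (fun p => φ (p, true)) = fun p => transmit M p.1 + p.2 := by
    funext p
    simp only [φ, transmit, and_true]
    split_ifs <;> ring
  have hφ_false : (fun p => φ (p, false)) = fun p => id p.1 + p.2 := by
    funext p
    simp [φ]
  rw [show (fun ω => B ω + X ω - (if M ≤ B ω ∧ E ω = true then M else 0)) =
      φ ∘ fun ω => ((B ω, X ω), E ω) from rfl,
    ← Measure.map_map hφ ((hB.prodMk hX).prodMk hE), hjoint,
    Measure.map_prod_bernoulliMeasure hφ, hφ_true, hφ_false,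
    Measure.map_prod_add_eq_map_conv (measurable_transmit M),
    Measure.map_prod_add_eq_map_conv measurable_id, Measure.map_id, Measure.add_conv,
    Measure.conv_smul_left, Measure.conv_smul_left]

-- The density of `B - M·1{B ≥ M ∧ E}` when `B` has density `statDensity` and `E` is Bernoulli.
noncomputable def postTransmitDensity (b lam M Q z : ℝ) : ℝ :=
  b * ((Iio M).indicator (statDensity b lam M Q) z +
      (Ici M).indicator (statDensity b lam M Q) (z + M)) +
    (1 - b) * statDensity b lam M Q z

section Density

variable {b lam M Q : ℝ}

lemma measurable_statDensity : Measurable (statDensity b lam M Q) :=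
  Measurable.ite measurableSet_Iio measurable_const
    (Measurable.ite measurableSet_Iio (by fun_prop) (by fun_prop))

lemma measurable_postTransmitDensity : Measurable (postTransmitDensity b lam M Q) :=
  (((measurable_statDensity.indicator measurableSet_Iio).add
    ((measurable_statDensity.indicator measurableSet_Ici).comp
      (measurable_add_const M))).const_mul b).add (measurable_statDensity.const_mul (1 - b))

lemma statDensity_nonneg (hM : 0 < M) (hQ : Q ≤ 0) (hbQ : 0 < b * lam + Q) (x : ℝ) :
    0 ≤ statDensity b lam M Q x := by
  unfold statDensity
  split_ifs with hx
  · rfl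
  · have : Real.exp (Q * x) ≤ 1 := Real.exp_le_one_iff.2 (by nlinarith)
    exact mul_nonneg (by positivity) (by linarith)
  · exact div_nonneg (by nlinarith [Real.exp_pos (Q * x)]) (by positivity)

lemma statDensity_of_neg {x : ℝ} (hx : x < 0) : statDensity b lam M Q x = 0 := if_pos hx

lemma continuous_statDensity (hM : 0 < M) (hroot : b * lam * Real.exp (Q * M) = b * lam + Q)
    (hbQ : 0 < b * lam + Q) : Continuous (statDensity b lam M Q) := by
  have hA : Continuous fun x => 1 / M * (1 - Real.exp (Q * x)) := by fun_prop
  have hC : Continuous fun x => -Q * Real.exp (Q * x) / (M * (b * lam + Q)) := by fun_prop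
  unfold statDensity
  simp only [← not_le, ite_not]
  refine Continuous.if_le (Continuous.if_le hC hA continuous_const continuous_id ?_)
    continuous_const continuous_const continuous_id ?_
  · rintro x rfl
    field_simp
    linear_combination hroot
  · rintro x rfl
    simp [not_le.2 hM]

lemma postTransmitDensity_nonneg (hb0 : 0 ≤ b) (hb1 : b ≤ 1) (hM : 0 < M) (hQ : Q ≤ 0)
    (hbQ : 0 < b * lam + Q) (z : ℝ) : 0 ≤ postTransmitDensity b lam M Q z := by
  have hg := statDensity_nonneg (b := b) (lam := lam) hM hQ hbQ
  have h₁ := Set.indicator_nonneg (fun x _ => hg x) (s := Iio M) z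
  have h₂ := Set.indicator_nonneg (fun x _ => hg x) (s := Ici M) (z + M)
  have h₃ := hg z
  unfold postTransmitDensity
  positivity

lemma mul_statDensity_add_of_nonneg (hlam : lam ≠ 0) (hM : 0 < M)
    (hroot : b * lam * Real.exp (Q * M) = b * lam + Q) (hbQ : 0 < b * lam + Q) {x : ℝ}
    (hx : 0 ≤ x) : b * statDensity b lam M Q (x + M) = -Q * Real.exp (Q * x) / (lam * M) := by
  rw [statDensity, if_neg (by linarith), if_neg (by linarith), mul_add, Real.exp_add]
  field_simp
  linear_combination -Q * hroot

lemma postTransmitDensity_of_neg {z : ℝ} (hz : z < 0) : postTransmitDensity b lam M Q z = 0 := by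
  have hzM : z + M ∉ Ici M := by simpa using hz
  simp [postTransmitDensity, statDensity_of_neg hz, hzM]

lemma hasDerivAt_statDensity (hlam : lam ≠ 0) (hM : 0 < M)
    (hroot : b * lam * Real.exp (Q * M) = b * lam + Q) (hbQ : 0 < b * lam + Q) {x : ℝ}
    (hx : 0 < x) (hxM : x ≠ M) :
    HasDerivAt (statDensity b lam M Q)
      (lam * (postTransmitDensity b lam M Q x - statDensity b lam M Q x)) x := by
  have hjump := mul_statDensity_add_of_nonneg hlam hM hroot hbQ hx.le
  rcases hxM.lt_or_gt with hxM | hxM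
  · have hloc : statDensity b lam M Q =ᶠ[𝓝 x] fun t => 1 / M * (1 - Real.exp (Q * t)) := by
      filter_upwards [Ioo_mem_nhds hx hxM] with t ht
      rw [statDensity, if_neg (not_lt.2 ht.1.le), if_pos ht.2]
    have hval : lam * (postTransmitDensity b lam M Q x - statDensity b lam M Q x) =
        1 / M * -(Real.exp (Q * x) * Q) := by
      rw [postTransmitDensity, indicator_of_mem (show x ∈ Iio M from hxM),
        indicator_of_mem (show x + M ∈ Ici M by simp; linarith), mul_add, hjump]
      field_simp
      ring
    rw [hval]
    refine HasDerivAt.congr_of_eventuallyEq ?_ hloc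
    exact (((hasDerivAt_id x).const_mul Q).exp.const_sub 1).const_mul _ |>.congr_deriv (by simp)
  · have hloc : statDensity b lam M Q =ᶠ[𝓝 x]
        fun t => -Q * Real.exp (Q * t) / (M * (b * lam + Q)) := by
      filter_upwards [Ioi_mem_nhds hxM] with t ht
      rw [statDensity, if_neg (by linarith [mem_Ioi.1 ht]), if_neg (not_lt.2 (le_of_lt ht))]
    have hval : lam * (postTransmitDensity b lam M Q x - statDensity b lam M Q x) =
        -Q * (Real.exp (Q * x) * Q) / (M * (b * lam + Q)) := by
      rw [postTransmitDensity, indicator_of_notMem (show x ∉ Iio M by simpa using hxM.le),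
        indicator_of_mem (show x + M ∈ Ici M by simp; linarith), zero_add, mul_add, hjump,
        statDensity, if_neg (by linarith), if_neg (not_lt.2 hxM.le)]
      have : lam * b + Q ≠ 0 := by rw [mul_comm]; exact hbQ.ne'
      field_simp
      ring
    rw [hval]
    refine HasDerivAt.congr_of_eventuallyEq ?_ hloc
    exact (((hasDerivAt_id x).const_mul Q).exp.const_mul (-Q)).div_const _ |>.congr_deriv
      (by simp)

lemma integral_mul_exp_postTransmitDensity (hlam : 0 < lam) (hb0 : 0 ≤ b) (hb1 : b ≤ 1)
    (hM : 0 < M) (hQ : Q ≤ 0) (hroot : b * lam * Real.exp (Q * M) = b * lam + Q)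
    (hbQ : 0 < b * lam + Q) {y : ℝ} (hy : 0 ≤ y) :
    IntegrableOn (fun x => lam * postTransmitDensity b lam M Q x * Real.exp (lam * x))
        (Ioc 0 y) ∧
      ∫ x in 0..y, lam * postTransmitDensity b lam M Q x * Real.exp (lam * x) =
        statDensity b lam M Q y * Real.exp (lam * y) := by
  set F := fun x => statDensity b lam M Q x * Real.exp (lam * x)
  have hF : Continuous F := by
    have := continuous_statDensity hM hroot hbQ
    fun_prop
  have hF' : ∀ x, 0 < x → x ≠ M →
      HasDerivAt F (lam * postTransmitDensity b lam M Q x * Real.exp (lam * x)) x := by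
    intro x hx hxM
    refine ((hasDerivAt_statDensity hlam.ne' hM hroot hbQ hx hxM).mul
      ((hasDerivAt_id x).const_mul lam).exp).congr_deriv ?_
    simp only [id]
    ring
  have hpos : ∀ x, 0 ≤ lam * postTransmitDensity b lam M Q x * Real.exp (lam * x) := fun x =>
    mul_nonneg (mul_nonneg hlam.le (postTransmitDensity_nonneg hb0 hb1 hM hQ hbQ x))
      (Real.exp_pos _).le
  have hint : IntegrableOn (fun x => lam * postTransmitDensity b lam M Q x * Real.exp (lam * x))
      (Ioc 0 (max y M)) :=
    integrableOn_deriv_of_nonneg_of_ne ⟨hM.le, le_max_right y M⟩ hF.continuousOn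
      (fun x hx hxM => hF' x hx.1 hxM) (fun x _ => hpos x)
  have hint_y := hint.mono_set (Ioc_subset_Ioc_right (le_max_left y M))
  refine ⟨hint_y, ?_⟩
  rw [integral_eq_of_hasDerivAt_off_countable_of_le F _ hy (countable_singleton M)
    hF.continuousOn (fun x hx => hF' x hx.1.1 hx.2)
    ((intervalIntegrable_iff_integrableOn_Ioc_of_le hy).2 hint_y)]
  simp [F, statDensity, hM]

lemma lconvolution_postTransmitDensity_exp_eq_statDensity (hlam : 0 < lam) (hb0 : 0 ≤ b)
    (hb1 : b ≤ 1) (hM : 0 < M) (hQ : Q ≤ 0) (hroot : b * lam * Real.exp (Q * M) = b * lam + Q)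
    (hbQ : 0 < b * lam + Q) :
    (fun x => ENNReal.ofReal (postTransmitDensity b lam M Q x)) ⋆ₗ
        (fun x => ENNReal.ofReal (if 0 ≤ x then lam * Real.exp (-lam * x) else 0)) =
      fun y => ENNReal.ofReal (statDensity b lam M Q y) := by
  funext y
  have hsupp : ∀ x, ENNReal.ofReal (postTransmitDensity b lam M Q x) *
      ENNReal.ofReal (if 0 ≤ -x + y then lam * Real.exp (-lam * (-x + y)) else 0) =
      (Icc 0 y).indicator (fun x => ENNReal.ofReal (Real.exp (-lam * y) *
        (lam * postTransmitDensity b lam M Q x * Real.exp (lam * x)))) x := by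
    intro x
    by_cases hx : x ∈ Icc 0 y
    · rw [indicator_of_mem hx, if_pos (by linarith [hx.2]),
        ← ENNReal.ofReal_mul (postTransmitDensity_nonneg hb0 hb1 hM hQ hbQ x)]
      congr 1
      rw [show -lam * (-x + y) = -lam * y + lam * x by ring, Real.exp_add]
      ring
    · rw [indicator_of_notMem hx]
      rcases lt_or_ge x 0 with hx0 | hx0
      · simp [postTransmitDensity_of_neg hx0]
      · simp [show ¬ 0 ≤ -x + y by linarith [show y < x by simpa [hx0] using hx]]
  rw [lconvolution_def, lintegral_congr hsupp, lintegral_indicator measurableSet_Icc]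
  rcases lt_or_ge y 0 with hy | hy
  · rw [Icc_eq_empty (not_le.2 hy), Measure.restrict_empty, lintegral_zero_measure,
      statDensity_of_neg hy, ENNReal.ofReal_zero]
  obtain ⟨hint, hintegral⟩ :=
    integral_mul_exp_postTransmitDensity hlam hb0 hb1 hM hQ hroot hbQ hy
  rw [setLIntegral_congr Ioc_ae_eq_Icc.symm,
    ← ofReal_integral_eq_lintegral_ofReal (hint.const_mul _)
      (ae_of_all _ fun x => mul_nonneg (Real.exp_pos _).le
        (mul_nonneg (mul_nonneg hlam.le (postTransmitDensity_nonneg hb0 hb1 hM hQ hbQ x))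
          (Real.exp_pos _).le)),
    integral_const_mul, ← intervalIntegral.integral_of_le hy, hintegral, mul_left_comm,
    ← Real.exp_add]
  simp

lemma smul_map_transmit_add_smul_statMeasure (hb0 : 0 ≤ b) (hb1 : b ≤ 1) (hM : 0 < M)
    (hQ : Q ≤ 0) (hbQ : 0 < b * lam + Q) :
    ENNReal.ofReal b • (statMeasure b lam M Q).map (transmit M) +
        ENNReal.ofReal (1 - b) • statMeasure b lam M Q =
      volume.withDensity fun x => ENNReal.ofReal (postTransmitDensity b lam M Q x) := by
  have hg := statDensity_nonneg (b := b) (lam := lam) hM hQ hbQ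
  have hmeas : Measurable fun x => ENNReal.ofReal (statDensity b lam M Q x) :=
    ENNReal.measurable_ofReal.comp measurable_statDensity
  have hjump : Measurable fun z => (Iio M).indicator (fun x => ENNReal.ofReal
      (statDensity b lam M Q x)) z + (Ici M).indicator (fun x => ENNReal.ofReal
      (statDensity b lam M Q x)) (z + M) :=
    (hmeas.indicator measurableSet_Iio).add
      ((hmeas.indicator measurableSet_Ici).comp (measurable_add_const M))
  have hind : ∀ (s : Set ℝ) x, s.indicator (fun x => ENNReal.ofReal (statDensity b lam M Q x)) x
      = ENNReal.ofReal (s.indicator (statDensity b lam M Q) x) := fun s x => by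
    by_cases hx : x ∈ s <;> simp [hx]
  rw [statMeasure, Measure.map_transmit_withDensity hmeas, ← withDensity_smul _ hmeas,
    ← withDensity_smul _ hjump, ← withDensity_add_left (hjump.const_smul _)]
  congr 1
  funext z
  have h₁ := Set.indicator_nonneg (fun x _ => hg x) (s := Iio M) z
  have h₂ := Set.indicator_nonneg (fun x _ => hg x) (s := Ici M) (z + M)
  have h₃ := hg z
  simp only [Pi.add_apply, Pi.smul_apply, smul_eq_mul, hind, postTransmitDensity]
  rw [ENNReal.ofReal_add (by positivity) (by positivity), ENNReal.ofReal_mul hb0,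
    ENNReal.ofReal_mul (by linarith), ENNReal.ofReal_add (by positivity) (by positivity)]

end Density

theorem stationary_distribution_of_energy_buffer_general
    {Ω : Type*} [MeasurableSpace Ω] (P : Measure Ω)
    (b lam M Q : ℝ) (hb0 : 0 < b) (hb1 : b ≤ 1) (hlam : 0 < lam) (hM : 0 < M)
    (hQ : Q < 0)
    (hroot : b * lam * Real.exp (Q * M) = b * lam + Q)
    (B X : Ω → ℝ) (E : Ω → Bool)
    (hB : Measurable B) (hX : Measurable X) (hE : Measurable E)
    (hjoint : Measure.map (fun ω => ((B ω, X ω), E ω)) P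
      = ((statMeasure b lam M Q).prod (expMeasure' lam)).prod (bernoulliMeasure b)) :
    Measure.map (fun ω => B ω + X ω - (if M ≤ B ω ∧ E ω = true then M else 0)) P
      = statMeasure b lam M Q := by
  have hbQ : 0 < b * lam + Q := hroot ▸ by positivity
  have hexp : Measurable fun x : ℝ =>
      ENNReal.ofReal (if 0 ≤ x then lam * Real.exp (-lam * x) else 0) :=
    ENNReal.measurable_ofReal.comp (Measurable.ite measurableSet_Ici (by fun_prop) measurable_const)
  have hpost : Measurable fun x => ENNReal.ofReal (postTransmitDensity b lam M Q x) :=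
    ENNReal.measurable_ofReal.comp measurable_postTransmitDensity
  rw [map_energyStep_eq_conv hB hX hE hjoint,
    smul_map_transmit_add_smul_statMeasure hb0.le hb1 hM hQ.le hbQ, expMeasure',
    conv_withDensity_eq_lconvolution hpost hexp,
    lconvolution_postTransmitDensity_exp_eq_statDensity hlam hb0.le hb1 hM hQ.le hroot hbQ, statMeasure]

/-- Theorem 2 of the paper: if `B`, `X`, `E` are independent with `B` distributed as the
stationary measure, `X` exponential with rate `λ` and `E` Bernoulli with parameter `b`
(joint law equal to the product of the marginals), then
`B + X − M·1{B ≥ M and E}` again has the stationary law; i.e. the piecewise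
exponential distribution is stationary for the energy-buffer Markov chain. -/
theorem stationary_distribution_of_energy_buffer
    {Ω : Type*} [MeasurableSpace Ω] (P : Measure Ω) [IsProbabilityMeasure P]
    (b lam M Q : ℝ) (hb0 : 0 < b) (hb1 : b ≤ 1) (hlam : 0 < lam) (hM : 0 < M)
    (hpsi : 1 < b * lam * M) (hQ : Q < 0)
    (hroot : b * lam * Real.exp (Q * M) = b * lam + Q)
    (B X : Ω → ℝ) (E : Ω → Bool)
    (hB : Measurable B) (hX : Measurable X) (hE : Measurable E)
    (hjoint : Measure.map (fun ω => ((B ω, X ω), E ω)) P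
      = ((statMeasure b lam M Q).prod (expMeasure' lam)).prod (bernoulliMeasure b)) :
    Measure.map (fun ω => B ω + X ω - (if M ≤ B ω ∧ E ω = true then M else 0)) P
      = statMeasure b lam M Q :=
  stationary_distribution_of_energy_buffer_general P b lam M Q hb0 hb1 hlam hM hQ hroot B X E hB hX
    hE hjoint
end

section
/- Let b ∈ (0,1], λ > 0, M > 0 with b·λ·M ≤ 1. Consider the Markov transition on [0,∞) taking state x to x + X − M·1{x ≥ M}·1{E}, where X is exponentially distributed with rate λ, E is Bernoulli with success probability b, and X, E are independent of each other and of the current state. Then no probability measure on [0,∞) is stationary for this transition; that is, there is no probability distribution μ such that if B has law μ and is independent of (X, E), then B + X − M·1{B ≥ M}·1{E} also has law μ. -/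
/-!
Let `Φ(s) = E e^{-sB}` be the Laplace transform of a would-be stationary buffer level `B`, and
`Ψ(s)`, `χ(s)` its parts on `{B ≥ M}` and `{B < M}`. Because the harvested energy is exponential,
stationarity becomes the identity `s Φ(s) = bλ (e^{sM} - 1) Ψ(s)` for `s > 0`. With `t = sM` and
`bλM ≤ 1` this gives `t χ ≤ (e^t - 1 - t) Ψ ≤ (e^t - 1 - t) e^{-t}`, while `χ ≥ e^{-t} P(B < M)`;
so `P(B < M) ≤ (e^t - 1 - t) / t → 0`, i.e. `B ≥ M` almost surely. Then `Ψ = Φ > 0`, and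
`s = bλ (e^{sM} - 1)` for every `s > 0`, which already fails when comparing `s = 1` and `s = 2`.
-/

open MeasureTheory

open Set
open ProbabilityTheory (exponentialPDF exponentialPDF_eq exponentialPDF_of_neg
  exponentialPDF_of_nonneg lintegral_exponentialPDF_eq_one measurable_exponentialPDFReal)
open scoped ENNReal

noncomputable def laplaceTransform (μ : Measure ℝ) (s : ℝ) : ℝ≥0∞ :=
  ∫⁻ x, ENNReal.ofReal (Real.exp (-(s * x))) ∂μ

noncomputable def bufferStep (M : ℝ) (p : (ℝ × ℝ) × Bool) : ℝ :=
  p.1.1 + p.1.2 - (if M ≤ p.1.1 ∧ p.2 = true then M else 0)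

@[fun_prop]
lemma measurable_bufferStep (M : ℝ) : Measurable (bufferStep M) := by
  have hset : MeasurableSet {p : (ℝ × ℝ) × Bool | M ≤ p.1.1 ∧ p.2 = true} :=
    (measurableSet_le measurable_const measurable_fst.fst).inter
      (measurable_snd (measurableSet_singleton true))
  exact (measurable_fst.fst.add measurable_fst.snd).sub (measurable_const.ite hset measurable_const)

lemma lintegral_bernoulliMeasure (b : ℝ) (g : Bool → ℝ≥0∞) :
    ∫⁻ e, g e ∂bernoulliMeasure b
      = ENNReal.ofReal b * g true + ENNReal.ofReal (1 - b) * g false := by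
  simp [bernoulliMeasure, lintegral_add_measure, lintegral_smul_measure, lintegral_dirac]

lemma expMeasure'_eq_withDensity_exponentialPDF (lam : ℝ) :
    expMeasure' lam = volume.withDensity (exponentialPDF lam) := by
  unfold expMeasure'
  congr 1 with x
  rw [exponentialPDF_eq, neg_mul]

instance sFinite_expMeasure' (lam : ℝ) : SFinite (expMeasure' lam) := by
  unfold expMeasure'
  infer_instance

lemma exponentialPDF_mul_exp_neg_mul {lam s : ℝ} (hlam : 0 < lam) (hs : 0 < lam + s) (w : ℝ) :
    exponentialPDF lam w * ENNReal.ofReal (Real.exp (-(s * w)))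
      = ENNReal.ofReal (lam / (lam + s)) * exponentialPDF (lam + s) w := by
  rcases lt_or_ge w 0 with hw | hw
  · simp [exponentialPDF_of_neg hw]
  rw [exponentialPDF_of_nonneg hw, exponentialPDF_of_nonneg hw,
    ← ENNReal.ofReal_mul (by positivity), ← ENNReal.ofReal_mul (by positivity)]
  congr 1
  rw [show -((lam + s) * w) = -(lam * w) + -(s * w) by ring, Real.exp_add]
  field_simp

lemma laplaceTransform_expMeasure' {lam s : ℝ} (hlam : 0 < lam) (hs : 0 < lam + s) :
    laplaceTransform (expMeasure' lam) s = ENNReal.ofReal (lam / (lam + s)) := by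
  rw [laplaceTransform, expMeasure'_eq_withDensity_exponentialPDF,
    lintegral_withDensity_eq_lintegral_mul _
      (f := exponentialPDF lam) (measurable_exponentialPDFReal lam).ennreal_ofReal (by fun_prop)]
  simp only [Pi.mul_apply, exponentialPDF_mul_exp_neg_mul hlam hs]
  rw [lintegral_const_mul' _ _ ENNReal.ofReal_ne_top, lintegral_exponentialPDF_eq_one hs, mul_one]

section LaplaceTransform

variable {μ : Measure ℝ} {s : ℝ}

lemma laplaceTransform_le_measure_univ (hμ : μ (Iio 0) = 0) (hs : 0 ≤ s) :
    laplaceTransform μ s ≤ μ univ := by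
  have hnonneg : ∀ᵐ x ∂μ, 0 ≤ x :=
    (measure_eq_zero_iff_ae_notMem.mp hμ).mono fun x hx => not_lt.mp hx
  calc laplaceTransform μ s ≤ ∫⁻ _, 1 ∂μ := lintegral_mono_ae <| hnonneg.mono fun x hx =>
        ENNReal.ofReal_le_one.mpr (Real.exp_le_one_iff.mpr (by nlinarith))
    _ = μ univ := lintegral_one

lemma laplaceTransform_ne_top [IsFiniteMeasure μ] (hμ : μ (Iio 0) = 0) (hs : 0 ≤ s) :
    laplaceTransform μ s ≠ ⊤ :=
  ne_top_of_le_ne_top (measure_ne_top μ univ) (laplaceTransform_le_measure_univ hμ hs)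

lemma laplaceTransform_restrict_ne_top [IsFiniteMeasure μ] (hμ : μ (Iio 0) = 0) (S : Set ℝ)
    (hs : 0 ≤ s) : laplaceTransform (μ.restrict S) s ≠ ⊤ :=
  laplaceTransform_ne_top (nonpos_iff_eq_zero.mp ((Measure.restrict_apply_le _ _).trans hμ.le)) hs

lemma laplaceTransform_ne_zero (hμ : μ ≠ 0) : laplaceTransform μ s ≠ 0 := by
  intro h
  rw [laplaceTransform, lintegral_eq_zero_iff (by fun_prop)] at h
  have : (ae μ).NeBot := ae_neBot.mpr hμ
  obtain ⟨x, hx⟩ := h.exists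
  simp only [Pi.zero_apply, ENNReal.ofReal_eq_zero] at hx
  exact hx.not_gt (Real.exp_pos _)

lemma laplaceTransform_restrict_Ici_le (M : ℝ) (hs : 0 ≤ s) :
    laplaceTransform (μ.restrict (Ici M)) s
      ≤ ENNReal.ofReal (Real.exp (-(s * M))) * μ (Ici M) := by
  rw [laplaceTransform, ← setLIntegral_const]
  exact setLIntegral_mono measurable_const fun x (hx : M ≤ x) =>
    ENNReal.ofReal_le_ofReal (Real.exp_le_exp.mpr (by nlinarith))

lemma le_laplaceTransform_restrict_Iio (M : ℝ) (hs : 0 ≤ s) :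
    ENNReal.ofReal (Real.exp (-(s * M))) * μ (Iio M)
      ≤ laplaceTransform (μ.restrict (Iio M)) s := by
  rw [laplaceTransform, ← setLIntegral_const]
  exact setLIntegral_mono (by fun_prop) fun x (hx : x < M) =>
    ENNReal.ofReal_le_ofReal (Real.exp_le_exp.mpr (by nlinarith))

lemma laplaceTransform_eq_restrict_Ici_add_restrict_Iio (M : ℝ) :
    laplaceTransform μ s
      = laplaceTransform (μ.restrict (Ici M)) s + laplaceTransform (μ.restrict (Iio M)) s := by
  rw [laplaceTransform, ← lintegral_add_compl _ (measurableSet_Ici (a := M)), compl_Ici]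
  rfl

lemma lintegral_exp_neg_mul_sub_ite (M : ℝ) :
    ∫⁻ x, ENNReal.ofReal (Real.exp (-(s * (x - if M ≤ x then M else 0)))) ∂μ
      = ENNReal.ofReal (Real.exp (s * M)) * laplaceTransform (μ.restrict (Ici M)) s
        + laplaceTransform (μ.restrict (Iio M)) s := by
  rw [← lintegral_add_compl _ (measurableSet_Ici (a := M)), compl_Ici, laplaceTransform,
    laplaceTransform, ← lintegral_const_mul' _ _ ENNReal.ofReal_ne_top]
  congr 1
  · refine setLIntegral_congr_fun measurableSet_Ici fun x (hx : M ≤ x) => ?_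
    rw [if_pos hx, ← ENNReal.ofReal_mul (Real.exp_pos _).le, ← Real.exp_add]
    ring_nf
  · refine setLIntegral_congr_fun measurableSet_Iio fun x (hx : x < M) => ?_
    rw [if_neg hx.not_ge, sub_zero]

end LaplaceTransform

lemma lintegral_exp_neg_mul_add_prod (μ ν : Measure ℝ) [SFinite ν] {f : ℝ → ℝ}
    (hf : Measurable f) (s : ℝ) :
    ∫⁻ p, ENNReal.ofReal (Real.exp (-(s * (f p.1 + p.2)))) ∂(μ.prod ν)
      = (∫⁻ x, ENNReal.ofReal (Real.exp (-(s * f x))) ∂μ) * laplaceTransform ν s := by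
  have hsplit : ∀ x w : ℝ, ENNReal.ofReal (Real.exp (-(s * (x + w))))
      = ENNReal.ofReal (Real.exp (-(s * x))) * ENNReal.ofReal (Real.exp (-(s * w))) := by
    intro x w
    rw [← ENNReal.ofReal_mul (Real.exp_pos _).le, ← Real.exp_add]
    ring_nf
  simp only [hsplit]
  exact lintegral_prod_mul (f := fun x => ENNReal.ofReal (Real.exp (-(s * f x))))
    (g := fun w => ENNReal.ofReal (Real.exp (-(s * w)))) (by fun_prop) (by fun_prop)

lemma laplaceTransform_map_bufferStep (μ ν : Measure ℝ) [SFinite ν]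
    (b M s : ℝ) :
    laplaceTransform (((μ.prod ν).prod (bernoulliMeasure b)).map (bufferStep M)) s
      = (ENNReal.ofReal b * (ENNReal.ofReal (Real.exp (s * M))
            * laplaceTransform (μ.restrict (Ici M)) s + laplaceTransform (μ.restrict (Iio M)) s)
          + ENNReal.ofReal (1 - b) * laplaceTransform μ s) * laplaceTransform ν s := by
  have hite : Measurable fun x : ℝ => x - if M ≤ x then M else 0 :=
    measurable_id.sub (measurable_const.ite measurableSet_Ici measurable_const)
  have hstep_true : ∀ a : ℝ × ℝ,
      bufferStep M (a, true) = (a.1 - if M ≤ a.1 then M else 0) + a.2 := fun a => by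
    simp only [bufferStep, and_true]
    ring
  have hstep_false : ∀ a : ℝ × ℝ, bufferStep M (a, false) = id a.1 + a.2 := fun a => by
    simp [bufferStep]
  rw [laplaceTransform, lintegral_map (by fun_prop) (measurable_bufferStep M),
    lintegral_prod _ (by fun_prop)]
  simp only [lintegral_bernoulliMeasure, hstep_true, hstep_false]
  rw [lintegral_add_right _ (by fun_prop), lintegral_const_mul' _ _ ENNReal.ofReal_ne_top,
    lintegral_const_mul' _ _ ENNReal.ofReal_ne_top, lintegral_exp_neg_mul_add_prod μ ν hite,
    lintegral_exp_neg_mul_add_prod μ ν measurable_id, lintegral_exp_neg_mul_sub_ite]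
  simp only [id, laplaceTransform]
  ring

lemma nonpos_of_forall_mul_le_exp_sub_one_sub {q : ℝ}
    (h : ∀ t > 0, t * q ≤ Real.exp t - 1 - t) : q ≤ 0 := by
  refine le_of_forall_pos_le_add fun ε hε => ?_
  set t := min ε 1
  have ht : 0 < t := lt_min hε one_pos
  have hquad : Real.exp t - 1 - t ≤ t * t := by
    rw [← sq]
    exact (le_abs_self _).trans (Real.abs_exp_sub_one_sub_id_le (by
      rw [abs_of_pos ht]; exact min_le_right _ _))
  have hq : q ≤ t := le_of_mul_le_mul_left ((h t ht).trans hquad) ht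
  linarith [min_le_left ε 1]

lemma not_forall_eq_mul_exp_mul_sub_one {a M : ℝ} (hM : M ≠ 0) :
    ¬ ∀ s > 0, s = a * (Real.exp (s * M) - 1) := by
  intro h
  have h1 := h 1 one_pos
  have h2 := h 2 two_pos
  rw [one_mul] at h1
  rw [show 2 * M = M + M by ring, Real.exp_add] at h2
  have hexp : Real.exp M = 1 := by linear_combination (Real.exp M + 1) * h1 - h2
  exact hM (Real.exp_eq_one_iff M |>.mp hexp)

section Stationary

variable {μ : Measure ℝ} {M : ℝ}

lemma mul_laplaceTransform_of_stationary [IsFiniteMeasure μ] {b lam : ℝ} (hμ : μ (Iio 0) = 0)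
    (hb0 : 0 ≤ b) (hb1 : b ≤ 1) (hlam : 0 < lam)
    (hstat : ((μ.prod (expMeasure' lam)).prod (bernoulliMeasure b)).map (bufferStep M) = μ)
    {s : ℝ} (hs : 0 < s) :
    s * (laplaceTransform μ s).toReal
      = b * lam * (Real.exp (s * M) - 1) * (laplaceTransform (μ.restrict (Ici M)) s).toReal := by
  have hF := congrArg ENNReal.toReal
    (laplaceTransform_eq_restrict_Ici_add_restrict_Iio (μ := μ) (s := s) M)
  have h := congrArg (laplaceTransform · s) hstat
  have hP := laplaceTransform_restrict_ne_top hμ (Ici M) hs.le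
  have hX := laplaceTransform_restrict_ne_top hμ (Iio M) hs.le
  have hΦ := laplaceTransform_ne_top hμ hs.le
  rw [laplaceTransform_map_bufferStep, laplaceTransform_expMeasure' hlam (by linarith)] at h
  replace h := congrArg ENNReal.toReal h
  simp (disch := finiteness) only [ENNReal.toReal_mul, ENNReal.toReal_add,
    ENNReal.toReal_ofReal hb0, ENNReal.toReal_ofReal (sub_nonneg.mpr hb1),
    ENNReal.toReal_ofReal (Real.exp_pos _).le, ENNReal.toReal_ofReal (by positivity : 0 ≤ lam / (lam + s))] at h hF
  field_simp at h
  linear_combination -h - b * lam * hF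

lemma measure_Iio_eq_zero_of_laplaceTransform_identity [IsProbabilityMeasure μ]
    (hμ : μ (Iio 0) = 0) {c : ℝ} (hM : 0 < M) (hc : c * M ≤ 1)
    (hkey : ∀ s > 0, s * (laplaceTransform μ s).toReal
      = c * (Real.exp (s * M) - 1) * (laplaceTransform (μ.restrict (Ici M)) s).toReal) :
    μ (Iio M) = 0 := by
  suffices hq : (μ (Iio M)).toReal ≤ 0 by
    exact ((ENNReal.toReal_eq_zero_iff _).mp (le_antisymm hq ENNReal.toReal_nonneg)).resolve_right
      (measure_ne_top μ _)
  refine nonpos_of_forall_mul_le_exp_sub_one_sub fun t ht => ?_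
  set s := t / M
  have hs : 0 < s := by positivity
  have hsM : s * M = t := div_mul_cancel₀ t hM.ne'
  have hPtop := laplaceTransform_restrict_ne_top hμ (Ici M) hs.le
  have hXtop := laplaceTransform_restrict_ne_top hμ (Iio M) hs.le
  have hF := congrArg ENNReal.toReal
    (laplaceTransform_eq_restrict_Ici_add_restrict_Iio (μ := μ) (s := s) M)
  rw [ENNReal.toReal_add hPtop hXtop] at hF
  set F := (laplaceTransform μ s).toReal
  set P := (laplaceTransform (μ.restrict (Ici M)) s).toReal
  set X := (laplaceTransform (μ.restrict (Iio M)) s).toReal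
  have hP0 : 0 ≤ P := ENNReal.toReal_nonneg
  have hP : P ≤ Real.exp (-t) := by
    refine ENNReal.toReal_le_of_le_ofReal (Real.exp_pos _).le ?_
    rw [← hsM]
    exact (laplaceTransform_restrict_Ici_le M hs.le).trans
      (mul_le_of_le_one_right' prob_le_one)
  have hX : Real.exp (-t) * (μ (Iio M)).toReal ≤ X := by
    rw [← hsM, ← ENNReal.toReal_ofReal (Real.exp_pos (-(s * M))).le, ← ENNReal.toReal_mul]
    exact ENNReal.toReal_mono hXtop (le_laplaceTransform_restrict_Iio M hs.le)
  have hkeyt : t * F = c * M * (Real.exp t - 1) * P := by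
    rw [← hsM]
    linear_combination M * hkey s hs
  have hexp : 0 ≤ Real.exp t - 1 - t := by linarith [Real.add_one_le_exp t]
  have hXP : t * X ≤ (Real.exp t - 1 - t) * P := by
    nlinarith [mul_nonneg (mul_nonneg (sub_nonneg.mpr hc) (by linarith : 0 ≤ Real.exp t - 1)) hP0]
  calc t * (μ (Iio M)).toReal
      = Real.exp t * (t * (Real.exp (-t) * (μ (Iio M)).toReal)) := by
        rw [Real.exp_neg]; field_simp
    _ ≤ Real.exp t * (t * X) := by gcongr
    _ ≤ Real.exp t * ((Real.exp t - 1 - t) * P) := by gcongr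
    _ ≤ Real.exp t * ((Real.exp t - 1 - t) * Real.exp (-t)) := by gcongr
    _ = Real.exp t - 1 - t := by
        rw [mul_left_comm, ← Real.exp_add, add_neg_cancel, Real.exp_zero, mul_one]

end Stationary

/-- Theorem 1 of the paper: if `b·λ·M ≤ 1`, then the energy-buffer Markov transition
`x ↦ x + X − M·1{x ≥ M}·1{E}` (with `X` exponential of rate `λ` and `E` Bernoulli of
parameter `b`, independent of each other and of the current state) admits no stationary
probability distribution on `[0,∞)`. -/
theorem no_stationary_distribution_of_energy_buffer
    (b lam M : ℝ) (hb0 : 0 < b) (hb1 : b ≤ 1) (hlam : 0 < lam) (hM : 0 < M)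
    (hpsi : b * lam * M ≤ 1) :
    ¬ ∃ μ : Measure ℝ, IsProbabilityMeasure μ ∧ μ (Set.Iio 0) = 0 ∧
      Measure.map
        (fun p : (ℝ × ℝ) × Bool =>
          p.1.1 + p.1.2 - (if M ≤ p.1.1 ∧ p.2 = true then M else 0))
        ((μ.prod (expMeasure' lam)).prod (bernoulliMeasure b)) = μ := by
  rintro ⟨μ, hμ, hμ0, hstat⟩
  have hkey (s : ℝ) (hs : 0 < s) :=
    mul_laplaceTransform_of_stationary (M := M) hμ0 hb0.le hb1 hlam hstat hs
  have hIio : μ (Iio M) = 0 := measure_Iio_eq_zero_of_laplaceTransform_identity hμ0 hM hpsi hkey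
  have hIci : μ.restrict (Ici M) = μ := Measure.restrict_eq_self_of_ae_mem <|
    (measure_eq_zero_iff_ae_notMem.mp hIio).mono fun x hx => mem_Ici.mpr (not_lt.mp hx)
  refine not_forall_eq_mul_exp_mul_sub_one (a := b * lam) hM.ne' fun s hs => ?_
  have hpos : 0 < (laplaceTransform μ s).toReal :=
    ENNReal.toReal_pos (laplaceTransform_ne_zero (IsProbabilityMeasure.ne_zero μ))
      (laplaceTransform_ne_top hμ0 hs.le)
  have hs_eq := hkey s hs
  rw [hIci] at hs_eq
  exact mul_right_cancel₀ hpos.ne' (by linear_combination hs_eq)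
end
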